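/- Fix λ > 0, λ' > 0, μ > 0, set ρ' = λ/λ', ρ = μ/λ, δ = ρ'(ρ+ρ') − 1 and assume ρ'(ρ+ρ') ≥ 1. Let u, v : ℝ → ℂ be twice continuously differentiable on an open interval containing [0, ρ'], with u(0) = 0 and v(0) = 0. Then ∫_0^{ρ'} (Mu)(y) · conj(v(y)) · r(y) dy = ∫_0^{ρ'} u(y) · conj((Mv)(y)) · r(y) dy, i.e. the operator M is symmetric with respect to the inner product of L²((0, ρ'), r(y)dy). -/

import Mathlib

/-!
Multiplying by the weight puts `M` in Sturm–Liouville form: `r · Mu = (p u')'` with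
`p(y) = (λ'y² − λy) r(y) = −λ' e^{ρ'y} (ρ' − y)^{δ+1}`, the value of `δ` being exactly what
makes `p' = (λy² + μy) r`. Integrating by parts, `∫ (p u')' v̄ = −∫ p u' v̄'` since `p(ρ') = 0`
and `v(0) = 0`; the right-hand side is conjugate-symmetric in `u` and `v`. The condition
`δ ≥ 0` keeps `p` and `p'` continuous up to `y = ρ'`.
-/

open MeasureTheory

/-- The restriction of the regularized Gribov operator to the negative imaginary
axis: `(Mu)(y) = (λ'y² − λy)u''(y) + (λy² + μy)u'(y)`. -/
noncomputable def Mop (lam' lam μ : ℝ) (u : ℝ → ℂ) (y : ℝ) : ℂ :=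
  ((lam' * y ^ 2 - lam * y : ℝ) : ℂ) * deriv (deriv u) y
    + ((lam * y ^ 2 + μ * y : ℝ) : ℂ) * deriv u y

/-- The weight `r(y) = y⁻¹ e^{ρ'y} (ρ' − y)^δ`. -/
noncomputable def rWeight (ρ' δ : ℝ) (y : ℝ) : ℝ :=
  y⁻¹ * Real.exp (ρ' * y) * (ρ' - y) ^ δ

open Set ComplexConjugate

/-- `(p u')'`, with `p'` a derivative of `p` supplied separately since `p` need not be
differentiable at the endpoints. -/
noncomputable def sturmLiouville (p p' : ℝ → ℝ) (u : ℝ → ℂ) (y : ℝ) : ℂ :=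
  (p' y : ℂ) * deriv u y + (p y : ℂ) * deriv (deriv u) y

section Green

variable {p p' : ℝ → ℝ} {u v : ℝ → ℂ} {s : Set ℝ} {α β : ℝ}

theorem integral_sturmLiouville_mul_conj (hαβ : α ≤ β) (hs : IsOpen s)
    (hsub : Icc α β ⊆ s) (hu : ContDiffOn ℝ 2 u s) (hv : ContDiffOn ℝ 1 v s)
    (hp : ContinuousOn p (Icc α β)) (hp' : ContinuousOn p' (Icc α β))
    (hpd : ∀ y ∈ Ioo α β, HasDerivAt p (p' y) y) :
    ∫ y in α..β, sturmLiouville p p' u y * conj (v y)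
      = p β * deriv u β * conj (v β) - p α * deriv u α * conj (v α)
        - ∫ y in α..β, p y * deriv u y * conj (deriv v y) := by
  have hu' : ContDiffOn ℝ 1 (deriv u) s := hu.deriv_of_isOpen hs (by norm_num)
  have hasDerivAt_of_mem {f : ℝ → ℂ} (hf : ContDiffOn ℝ 1 f s) {y : ℝ}
      (hy : y ∈ Ioo α β) : HasDerivAt f (deriv f y) y :=
    ((hf.contDiffAt (hs.mem_nhds (hsub (Ioo_subset_Icc_self hy)))).differentiableAt
      one_ne_zero).hasDerivAt
  have hcp := Complex.continuous_ofReal.comp_continuousOn hp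
  have hcu' := (hu.continuousOn_deriv_of_isOpen hs (by norm_num)).mono hsub
  have hcv := (hv.continuousOn.mono hsub).star
  have hcSL : ContinuousOn (fun y ↦ sturmLiouville p p' u y * conj (v y)) (Icc α β) :=
    (((Complex.continuous_ofReal.comp_continuousOn hp').mul hcu').add
      (hcp.mul ((hu'.continuousOn_deriv_of_isOpen hs le_rfl).mono hsub))).mul hcv
  have hcuv : ContinuousOn (fun y ↦ (p y : ℂ) * deriv u y * conj (deriv v y)) (Icc α β) :=
    (hcp.mul hcu').mul ((hv.continuousOn_deriv_of_isOpen hs le_rfl).mono hsub).star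
  have hFTC : ∫ y in α..β, (sturmLiouville p p' u y * conj (v y)
        + p y * deriv u y * conj (deriv v y))
      = p β * deriv u β * conj (v β) - p α * deriv u α * conj (v α) :=
    intervalIntegral.integral_eq_sub_of_hasDerivAt_of_le
      (f := fun y ↦ p y * deriv u y * conj (v y)) hαβ ((hcp.mul hcu').mul hcv)
      (fun y hy ↦ ((hpd y hy).ofReal_comp.mul (hasDerivAt_of_mem hu' hy)).mul
        (hasDerivAt_of_mem hv hy).star)
      ((hcSL.add hcuv).intervalIntegrable_of_Icc hαβ)
  rw [intervalIntegral.integral_add (hcSL.intervalIntegrable_of_Icc hαβ)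
    (hcuv.intervalIntegrable_of_Icc hαβ)] at hFTC
  exact eq_sub_of_add_eq hFTC


theorem integral_sturmLiouville_mul_conj_eq_integral_mul_conj_sturmLiouville (hαβ : α ≤ β)
    (hs : IsOpen s) (hsub : Icc α β ⊆ s) (hu : ContDiffOn ℝ 2 u s) (hv : ContDiffOn ℝ 2 v s)
    (hp : ContinuousOn p (Icc α β)) (hp' : ContinuousOn p' (Icc α β))
    (hpd : ∀ y ∈ Ioo α β, HasDerivAt p (p' y) y) (hpβ : p β = 0)
    (huα : u α = 0) (hvα : v α = 0) :
    ∫ y in Ioc α β, sturmLiouville p p' u y * conj (v y)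
      = ∫ y in Ioc α β, u y * conj (sturmLiouville p p' v y) := by
  have hsym : ∀ z w : ℝ → ℂ, ContDiffOn ℝ 2 z s → ContDiffOn ℝ 2 w s → w α = 0 →
      ∫ y in Ioc α β, sturmLiouville p p' z y * conj (w y)
        = -∫ y in Ioc α β, p y * deriv z y * conj (deriv w y) := by
    intro z w hz hw hwα
    rw [← intervalIntegral.integral_of_le hαβ, ← intervalIntegral.integral_of_le hαβ,
      integral_sturmLiouville_mul_conj hαβ hs hsub hz (hw.of_le one_le_two) hp hp' hpd]
    simp [hpβ, hwα]
  calc ∫ y in Ioc α β, sturmLiouville p p' u y * conj (v y)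
      = -∫ y in Ioc α β, p y * deriv u y * conj (deriv v y) := hsym u v hu hv hvα
    _ = conj (-∫ y in Ioc α β, p y * deriv v y * conj (deriv u y)) := by
      rw [map_neg, ← integral_conj]
      simp only [map_mul, Complex.conj_conj, Complex.conj_ofReal, mul_right_comm]
    _ = ∫ y in Ioc α β, u y * conj (sturmLiouville p p' v y) := by
      rw [← hsym v u hv hu huα, ← integral_conj]
      simp only [map_mul, Complex.conj_conj, mul_comm]

end Green

section Gribov

variable {lam lam' μ ρ' δ : ℝ}

noncomputable def gribovCoeff (lam' ρ' δ : ℝ) (y : ℝ) : ℝ :=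
  -lam' * (ρ' - y) * Real.exp (ρ' * y) * (ρ' - y) ^ δ

noncomputable def gribovCoeffDeriv (lam μ ρ' δ : ℝ) (y : ℝ) : ℝ :=
  (lam * y + μ) * Real.exp (ρ' * y) * (ρ' - y) ^ δ

theorem continuous_gribovCoeff (hδ : 0 ≤ δ) : Continuous (gribovCoeff lam' ρ' δ) := by
  unfold gribovCoeff
  fun_prop (disch := assumption)

theorem continuous_gribovCoeffDeriv (hδ : 0 ≤ δ) :
    Continuous (gribovCoeffDeriv lam μ ρ' δ) := by
  unfold gribovCoeffDeriv
  fun_prop (disch := assumption)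

theorem hasDerivAt_gribovCoeff (hl : lam' * ρ' = lam) (hm : lam' * (δ + 1) = lam * ρ' + μ)
    {y : ℝ} (hy : y < ρ') :
    HasDerivAt (gribovCoeff lam' ρ' δ) (gribovCoeffDeriv lam μ ρ' δ y) y := by
  have hpos : 0 < ρ' - y := sub_pos.mpr hy
  have hsub : HasDerivAt (fun y : ℝ ↦ ρ' - y) (-1) y := by
    simpa using (hasDerivAt_id y).const_sub ρ'
  have hexp : HasDerivAt (fun y : ℝ ↦ Real.exp (ρ' * y)) (Real.exp (ρ' * y) * ρ') y := by
    simpa using ((hasDerivAt_id y).const_mul ρ').exp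
  have hpow : HasDerivAt (fun y : ℝ ↦ (ρ' - y) ^ δ) (δ * (ρ' - y) ^ (δ - 1) * -1) y :=
    (Real.hasDerivAt_rpow_const (Or.inl hpos.ne')).comp y hsub
  refine (((hsub.const_mul (-lam')).mul hexp).mul hpow).congr_deriv ?_
  simp only [Pi.mul_apply, gribovCoeffDeriv]
  rw [Real.rpow_sub_one hpos.ne']
  field_simp
  linear_combination hm + (y - ρ') * hl

theorem Mop_mul_rWeight (hl : lam' * ρ' = lam) (u : ℝ → ℂ) {y : ℝ} (hy : y ≠ 0) :
    Mop lam' lam μ u y * rWeight ρ' δ y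
      = sturmLiouville (gribovCoeff lam' ρ' δ) (gribovCoeffDeriv lam μ ρ' δ) u y := by
  have hp : gribovCoeff lam' ρ' δ y = (lam' * y ^ 2 - lam * y) * rWeight ρ' δ y := by
    rw [gribovCoeff, rWeight, ← hl]
    field_simp
    ring
  have hp' : gribovCoeffDeriv lam μ ρ' δ y = (lam * y ^ 2 + μ * y) * rWeight ρ' δ y := by
    rw [gribovCoeffDeriv, rWeight]
    field_simp
  rw [sturmLiouville, hp, hp', Mop]
  push_cast
  ring

end Gribov

theorem Mop_symmetric_general (lam lam' μ : ℝ) (hlam : 0 < lam) (hlam' : 0 < lam')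
    (ρ' ρ δ : ℝ) (hρ' : ρ' = lam / lam') (hρ : ρ = μ / lam)
    (hδ : δ = ρ' * (ρ + ρ') - 1) (hge : 1 ≤ ρ' * (ρ + ρ'))
    (u v : ℝ → ℂ) (a b : ℝ) (ha : a < 0) (hb : ρ' < b)
    (hu : ContDiffOn ℝ 2 u (Set.Ioo a b)) (hv : ContDiffOn ℝ 2 v (Set.Ioo a b))
    (hu0 : u 0 = 0) (hv0 : v 0 = 0) :
    ∫ y in Set.Ioc (0 : ℝ) ρ',
        Mop lam' lam μ u y * (starRingEnd ℂ) (v y) * (rWeight ρ' δ y : ℂ)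
      = ∫ y in Set.Ioc (0 : ℝ) ρ',
          u y * (starRingEnd ℂ) (Mop lam' lam μ v y) * (rWeight ρ' δ y : ℂ) := by
  have hl : lam' * ρ' = lam := by rw [hρ']; field_simp
  have hm : lam' * (δ + 1) = lam * ρ' + μ := by
    rw [hδ, hρ, hρ']
    field_simp
    ring
  have hρ'_pos : 0 < ρ' := hρ' ▸ div_pos hlam hlam'
  have hδ_nonneg : 0 ≤ δ := by linarith
  calc _ = ∫ y in Ioc 0 ρ',
          sturmLiouville (gribovCoeff lam' ρ' δ) (gribovCoeffDeriv lam μ ρ' δ) u y * conj (v y) :=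
        setIntegral_congr_fun measurableSet_Ioc fun y hy ↦ by
          rw [mul_right_comm, Mop_mul_rWeight hl u hy.1.ne']
    _ = ∫ y in Ioc 0 ρ', u y
          * conj (sturmLiouville (gribovCoeff lam' ρ' δ) (gribovCoeffDeriv lam μ ρ' δ) v y) :=
        integral_sturmLiouville_mul_conj_eq_integral_mul_conj_sturmLiouville hρ'_pos.le isOpen_Ioo
          (Icc_subset_Ioo ha hb) hu hv (continuous_gribovCoeff hδ_nonneg).continuousOn
          (continuous_gribovCoeffDeriv hδ_nonneg).continuousOn
          (fun y hy ↦ hasDerivAt_gribovCoeff hl hm hy.2) (by simp [gribovCoeff]) hu0 hv0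
    _ = _ :=
        setIntegral_congr_fun measurableSet_Ioc fun y hy ↦ by
          rw [← Mop_mul_rWeight hl v hy.1.ne', map_mul, Complex.conj_ofReal, mul_assoc]

/-- If `ρ'(ρ + ρ') ≥ 1`, the operator `M` is symmetric with respect to the
inner product of `L²((0, ρ'), r(y)dy)` on twice continuously differentiable
functions vanishing at `0`. -/
theorem Mop_symmetric (lam lam' μ : ℝ) (hlam : 0 < lam) (hlam' : 0 < lam')
    (hμ : 0 < μ) (ρ' ρ δ : ℝ) (hρ' : ρ' = lam / lam') (hρ : ρ = μ / lam)
    (hδ : δ = ρ' * (ρ + ρ') - 1) (hge : 1 ≤ ρ' * (ρ + ρ'))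
    (u v : ℝ → ℂ) (a b : ℝ) (ha : a < 0) (hb : ρ' < b)
    (hu : ContDiffOn ℝ 2 u (Set.Ioo a b)) (hv : ContDiffOn ℝ 2 v (Set.Ioo a b))
    (hu0 : u 0 = 0) (hv0 : v 0 = 0) :
    ∫ y in Set.Ioc (0 : ℝ) ρ',
        Mop lam' lam μ u y * (starRingEnd ℂ) (v y) * (rWeight ρ' δ y : ℂ)
      = ∫ y in Set.Ioc (0 : ℝ) ρ',
          u y * (starRingEnd ℂ) (Mop lam' lam μ v y) * (rWeight ρ' δ y : ℂ) :=
  Mop_symmetric_general lam lam' μ hlam hlam' ρ' ρ δ hρ' hρ hδ hge u v a b ha hb hu hv hu0 hv0
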